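/- Let x = (x₁, x₂) be a standard 2D Gaussian and b > 0, with label y = +1 if x₂ < b|x₁| and y = −1 otherwise. Then the optimal error over homogeneous halfspaces satisfies OPT = 1/2 − arctan(1/b)/π; in particular OPT → 0 as b → 0⁺ and OPT → 1/2 as b → ∞. -/

import Mathlib

/-!
Let `W = {x | b * |x.1| ≤ x.2}` be the wedge labelled `-1`. Where `⟪w, x⟫ ≤ 0` the classifier
`sign ⟪w, x⟫` errs outside `W`, so its error is at least `μ {⟪w, x⟫ ≤ 0} - μ W = 1/2 - μ W`, every
half-plane through the origin having mass `1/2` by the symmetry `x ↦ -x`. For `w = (0, -1)` the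
half-plane `{0 ≤ x.2}` contains `W`, and the classifier errs only on `{0 ≤ x.2} \ W` and on a
null line, so the bound is attained. The standard Gaussian density is radial, so in polar
coordinates the mass of a cone is its opening angle over `2π`; `W` opens at angle
`2 arctan (1 / b)`.
-/

open MeasureTheory ProbabilityTheory Filter Real Set
open scoped ENNReal

theorem measureReal_nonpos_eq_half {E : Type*} [MeasurableSpace E] [InvolutiveNeg E]
    [MeasurableNeg E] (μ : Measure E) [IsProbabilityMeasure μ] [μ.IsNegInvariant]
    {f : E → ℝ} (hf : Measurable f) (hf_neg : ∀ x, f (-x) = -f x)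
    (hf_zero : μ {x | f x = 0} = 0) : μ.real {x | f x ≤ 0} = 1 / 2 := by
  have hsymm : μ.real {x | 0 ≤ f x} = μ.real {x | f x ≤ 0} := by
    rw [measureReal_def, measureReal_def, ← Measure.measure_preimage_neg μ]
    simp [hf_neg]
  have hcover := measureReal_union_add_inter (μ := μ) (s := {x | f x ≤ 0})
    (t := {x | 0 ≤ f x}) (measurableSet_le measurable_const hf)
  have hunion : {x | f x ≤ 0} ∪ {x | 0 ≤ f x} = univ := by ext x; simp [le_total]
  have hinter : {x | f x ≤ 0} ∩ {x | 0 ≤ f x} = {x | f x = 0} := by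
    ext x; simp [le_antisymm_iff]
  rw [hunion, hinter, measureReal_def _ {x | f x = 0}, hf_zero, hsymm] at hcover
  simp only [probReal_univ, ENNReal.toReal_zero] at hcover
  linarith

instance ProbabilityTheory.instIsNegInvariantGaussianReal (v : NNReal) :
    (gaussianReal 0 v).IsNegInvariant :=
  ⟨by rw [Measure.neg_def]; simpa using gaussianReal_map_neg (μ := 0) (v := v)⟩

instance MeasureTheory.Measure.prod.instIsNegInvariant {α β : Type*} [MeasurableSpace α]
    [MeasurableSpace β] [Neg α] [Neg β] [MeasurableNeg α] [MeasurableNeg β]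
    (μ : Measure α) (ν : Measure β) [SFinite μ] [SFinite ν] [μ.IsNegInvariant] [ν.IsNegInvariant] :
    (μ.prod ν).IsNegInvariant :=
  ⟨by
    change (μ.prod ν).map (Prod.map Neg.neg Neg.neg) = _
    rw [← Measure.map_prod_map _ _ measurable_neg measurable_neg, ← Measure.neg_def,
      ← Measure.neg_def, Measure.neg_eq_self, Measure.neg_eq_self]⟩

theorem measure_ker_eq_zero {E : Type*} [NormedAddCommGroup E] [NormedSpace ℝ E]
    [MeasurableSpace E] [BorelSpace E] [FiniteDimensional ℝ E] {μ ν : Measure E}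
    [ν.IsAddHaarMeasure] (hμν : μ ≪ ν) {f : E →ₗ[ℝ] ℝ} (hf : f ≠ 0) :
    μ (LinearMap.ker f) = 0 :=
  hμν (Measure.addHaar_submodule ν _ (by rwa [Ne, LinearMap.ker_eq_top]))

theorem gaussianReal_prod_eq_withDensity :
    (gaussianReal 0 1).prod (gaussianReal 0 1) =
      volume.withDensity fun x ↦ ENNReal.ofReal (exp (-(x.1 ^ 2 + x.2 ^ 2) / 2) / (2 * π)) := by
  rw [gaussianReal_of_var_ne_zero 0 one_ne_zero, prod_withDensity (measurable_gaussianPDF 0 1)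
    (measurable_gaussianPDF 0 1), ← Measure.volume_eq_prod]
  congr 1
  ext x
  rw [gaussianPDF, gaussianPDF, ← ENNReal.ofReal_mul (gaussianPDFReal_nonneg 0 1 _)]
  congr 1
  simp only [gaussianPDFReal, NNReal.coe_one, mul_one, sub_zero]
  rw [mul_mul_mul_comm, ← mul_inv, Real.mul_self_sqrt (by positivity), ← Real.exp_add]
  ring_nf

theorem withDensity_radial_apply_cone {ρ : ℝ → ℝ≥0∞} (hρ : Measurable ρ) {A : Set (ℝ × ℝ)}
    (hA : MeasurableSet A) {s : Set ℝ} (hs : MeasurableSet s) (hsπ : s ⊆ Ioo (-π) π)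
    (hAs : ∀ r > 0, ∀ θ ∈ Ioo (-π) π, (r * cos θ, r * sin θ) ∈ A ↔ θ ∈ s) :
    volume.withDensity (fun x ↦ ρ (x.1 ^ 2 + x.2 ^ 2)) A =
      (∫⁻ r in Ioi 0, ENNReal.ofReal r * ρ (r ^ 2)) * volume s := by
  have hpolar : EqOn (fun p : ℝ × ℝ ↦ ENNReal.ofReal p.1 •
        A.indicator (fun x ↦ ρ (x.1 ^ 2 + x.2 ^ 2)) (polarCoord.symm p))
      (fun p ↦ ENNReal.ofReal p.1 * ρ (p.1 ^ 2) * s.indicator 1 p.2) polarCoord.target := by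
    rintro ⟨r, θ⟩ ⟨hr, hθ⟩
    have hsq : (r * cos θ) ^ 2 + (r * sin θ) ^ 2 = r ^ 2 := by
      linear_combination r ^ 2 * sin_sq_add_cos_sq θ
    have hmem := hAs r hr θ hθ
    by_cases hθs : θ ∈ s
    · simp [polarCoord_symm_apply, hθs, hmem.2 hθs, hsq]
    · simp [polarCoord_symm_apply, hθs, mt hmem.1 hθs]
  rw [withDensity_apply _ hA, ← lintegral_indicator hA, ← lintegral_comp_polarCoord_symm,
    setLIntegral_congr_fun polarCoord.open_target.measurableSet hpolar, polarCoord_target,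
    Measure.volume_eq_prod, ← Measure.prod_restrict, lintegral_prod_mul
    (f := fun r ↦ ENNReal.ofReal r * ρ (r ^ 2)) (by fun_prop)
    (measurable_one.indicator hs).aemeasurable, lintegral_indicator_one hs,
    Measure.restrict_apply hs, inter_eq_left.2 hsπ]

theorem abs_tan_le_iff {t c : ℝ} (ht : t ∈ Ioo (-(π / 2)) (π / 2)) :
    |tan t| ≤ c ↔ |t| ≤ arctan c := by
  rw [abs_le, abs_le, ← arctan_strictMono.le_iff_le (a := -c),
    ← arctan_strictMono.le_iff_le (b := c), arctan_tan ht.1 ht.2, arctan_neg]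

theorem mul_abs_cos_le_sin_iff {b φ : ℝ} (hb : 0 < b) (hφ : φ ∈ Ioo (-π) π) :
    b * |cos φ| ≤ sin φ ↔ |φ - π / 2| ≤ arctan b⁻¹ := by
  obtain ⟨t, rfl⟩ : ∃ t, φ = π / 2 - t := ⟨π / 2 - φ, by ring⟩
  rw [cos_pi_div_two_sub, sin_pi_div_two_sub, sub_sub_cancel_left, abs_neg]
  have harctan : arctan b⁻¹ < π / 2 := arctan_lt_pi_div_two _
  rcases le_or_gt (cos t) 0 with hcos | hcos
  · refine iff_of_false (fun h ↦ ?_) (fun h ↦ ?_)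
    · have hsin : sin t = 0 := abs_nonpos_iff.1 (by nlinarith [abs_nonneg (sin t)])
      have hcos0 : cos t = 0 := le_antisymm hcos (by simpa [hsin] using h)
      simpa [hsin, hcos0] using sin_sq_add_cos_sq t
    · exact hcos.not_gt <|
        cos_pos_of_mem_Ioo ⟨by linarith [neg_abs_le t], by linarith [le_abs_self t]⟩
  · have ht : t ∈ Ioo (-(π / 2)) (π / 2) := by
      refine ⟨by linarith [hφ.2], lt_of_not_ge fun h ↦ hcos.not_ge ?_⟩
      exact cos_nonpos_of_pi_div_two_le_of_le h (by linarith [hφ.1])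
    rw [← abs_tan_le_iff ht, tan_eq_sin_div_cos, abs_div, abs_of_pos hcos, div_le_iff₀ hcos,
      le_inv_mul_iff₀ hb]

theorem gaussianReal_prod_apply_cone {A : Set (ℝ × ℝ)} (hA : MeasurableSet A) {s : Set ℝ}
    (hs : MeasurableSet s) (hsπ : s ⊆ Ioo (-π) π)
    (hAs : ∀ r > 0, ∀ θ ∈ Ioo (-π) π, (r * cos θ, r * sin θ) ∈ A ↔ θ ∈ s) :
    (gaussianReal 0 1).prod (gaussianReal 0 1) A = volume s / ENNReal.ofReal (2 * π) := by
  set R := ∫⁻ r in Ioi 0, ENNReal.ofReal r * ENNReal.ofReal (exp (-(r ^ 2) / 2) / (2 * π))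
  have hcone : ∀ {A : Set (ℝ × ℝ)} {s : Set ℝ}, MeasurableSet A → MeasurableSet s →
      s ⊆ Ioo (-π) π → (∀ r > 0, ∀ θ ∈ Ioo (-π) π, (r * cos θ, r * sin θ) ∈ A ↔ θ ∈ s) →
      (gaussianReal 0 1).prod (gaussianReal 0 1) A = R * volume s := fun hA hs hsπ hAs ↦ by
    rw [gaussianReal_prod_eq_withDensity]
    exact withDensity_radial_apply_cone (ρ := fun t ↦ ENNReal.ofReal (exp (-t / 2) / (2 * π)))
      (by fun_prop) hA hs hsπ hAs
  -- Taking the whole plane as the cone identifies the radial factor.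
  have hR : R = (ENNReal.ofReal (2 * π))⁻¹ := by
    refine ENNReal.eq_inv_of_mul_eq_one_left ?_
    rw [← measure_univ (μ := (gaussianReal 0 1).prod (gaussianReal 0 1)),
      hcone MeasurableSet.univ measurableSet_Ioo subset_rfl (by simp), Real.volume_Ioo]
    ring_nf
  rw [hcone hA hs hsπ hAs, hR, div_eq_mul_inv, mul_comm]

theorem gaussianReal_prod_real_wedge {b : ℝ} (hb : 0 < b) :
    ((gaussianReal 0 1).prod (gaussianReal 0 1)).real {x | b * |x.1| ≤ x.2} = arctan b⁻¹ / π := by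
  have hθ : 0 ≤ arctan b⁻¹ := arctan_nonneg.2 (inv_nonneg.2 hb.le)
  have hθπ : arctan b⁻¹ < π / 2 := arctan_lt_pi_div_two _
  rw [measureReal_def,
    gaussianReal_prod_apply_cone (s := Icc (π / 2 - arctan b⁻¹) (π / 2 + arctan b⁻¹))
    (measurableSet_le (by fun_prop) (by fun_prop)) measurableSet_Icc
    (Icc_subset_Ioo (by linarith [pi_pos]) (by linarith))]
  · rw [Real.volume_Icc, ENNReal.toReal_div, ENNReal.toReal_ofReal (by linarith),
      ENNReal.toReal_ofReal (by positivity)]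
    field_simp
    ring
  · intro r hr θ hθ
    change b * |r * cos θ| ≤ r * sin θ ↔ _
    rw [abs_mul, abs_of_pos hr, mul_left_comm, mul_le_mul_iff_right₀ hr,
      mul_abs_cos_le_sin_iff hb hθ, abs_sub_comm, mem_Icc_iff_abs_le]

theorem Real.one_ne_sign_iff {t : ℝ} : 1 ≠ Real.sign t ↔ t ≤ 0 := by
  rcases lt_trichotomy t 0 with h | rfl | h
  · norm_num [Real.sign_of_neg h, h.le]
  · simp
  · simp [Real.sign_of_pos h, h]

theorem Real.neg_one_ne_sign_iff {t : ℝ} : -1 ≠ Real.sign t ↔ 0 ≤ t := by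
  rcases lt_trichotomy t 0 with h | rfl | h
  · simp [Real.sign_of_neg h, h]
  · simp
  · norm_num [Real.sign_of_pos h, h.le]

theorem measureReal_nonpos_sub_le_measureReal_ne_sign {α : Type*} [MeasurableSpace α]
    (μ : Measure α) [IsFiniteMeasure μ] (p : α → Prop) [DecidablePred p] (f : α → ℝ) :
    μ.real {x | f x ≤ 0} - μ.real {x | ¬p x} ≤
      μ.real {x | (if p x then 1 else -1) ≠ Real.sign (f x)} := by
  have hsub : {x | f x ≤ 0} ⊆ {x | (if p x then 1 else -1) ≠ Real.sign (f x)} ∪ {x | ¬p x} := by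
    intro x hx
    by_cases hp : p x
    · exact Or.inl (by simpa [hp, Real.one_ne_sign_iff] using hx)
    · exact Or.inr hp
  linarith [measureReal_mono hsub (μ := μ), measureReal_union_le (μ := μ)
    {x | (if p x then 1 else -1) ≠ Real.sign (f x)} {x | ¬p x}]

theorem gaussianReal_prod_line_eq_zero {w : ℝ × ℝ} (hw : w ≠ 0) :
    (gaussianReal 0 1).prod (gaussianReal 0 1) {x | w.1 * x.1 + w.2 * x.2 = 0} = 0 := by
  let f : ℝ × ℝ →ₗ[ℝ] ℝ := w.1 • LinearMap.fst ℝ ℝ ℝ + w.2 • LinearMap.snd ℝ ℝ ℝ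
  have hf : f ≠ 0 := fun h ↦ hw (Prod.ext (by simpa [f] using LinearMap.congr_fun h (1, 0))
    (by simpa [f] using LinearMap.congr_fun h (0, 1)))
  have hac : (gaussianReal 0 1).prod (gaussianReal 0 1) ≪ volume := by
    rw [gaussianReal_prod_eq_withDensity]
    exact withDensity_absolutelyContinuous _ _
  have hker : (LinearMap.ker f : Set (ℝ × ℝ)) = {x | w.1 * x.1 + w.2 * x.2 = 0} := by
    ext x; simp [f]
  rw [← hker]
  exact measure_ker_eq_zero hac hf

theorem gaussianReal_prod_real_halfPlane {w : ℝ × ℝ} (hw : w ≠ 0) :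
    ((gaussianReal 0 1).prod (gaussianReal 0 1)).real {x | w.1 * x.1 + w.2 * x.2 ≤ 0} = 1 / 2 :=
  measureReal_nonpos_eq_half _ (by fun_prop)
    (fun x ↦ by simp only [Prod.fst_neg, Prod.snd_neg]; ring) (gaussianReal_prod_line_eq_zero hw)

noncomputable def halfspaceError (b : ℝ) (w : ℝ × ℝ) : ℝ :=
  ((gaussianReal 0 1).prod (gaussianReal 0 1)).real
    {x | (if x.2 < b * |x.1| then 1 else -1) ≠ Real.sign (w.1 * x.1 + w.2 * x.2)}

theorem le_halfspaceError {b : ℝ} (hb : 0 < b) {w : ℝ × ℝ} (hw : w ≠ 0) :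
    1 / 2 - arctan b⁻¹ / π ≤ halfspaceError b w := by
  have h := measureReal_nonpos_sub_le_measureReal_ne_sign
    ((gaussianReal 0 1).prod (gaussianReal 0 1)) (fun x ↦ x.2 < b * |x.1|)
    (fun x ↦ w.1 * x.1 + w.2 * x.2)
  simp only [not_lt] at h
  rwa [gaussianReal_prod_real_halfPlane hw, gaussianReal_prod_real_wedge hb] at h

theorem halfspaceError_zero_neg_one {b : ℝ} (hb : 0 < b) :
    halfspaceError b (0, -1) = 1 / 2 - arctan b⁻¹ / π := by
  refine le_antisymm ?_ (le_halfspaceError hb (by simp))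
  set μ := (gaussianReal 0 1).prod (gaussianReal 0 1)
  set W := {x : ℝ × ℝ | b * |x.1| ≤ x.2}
  set H := {x : ℝ × ℝ | (0 : ℝ) * x.1 + -1 * x.2 ≤ 0}
  set L := {x : ℝ × ℝ | (0 : ℝ) * x.1 + -1 * x.2 = 0}
  have hW : μ.real W = arctan b⁻¹ / π := gaussianReal_prod_real_wedge hb
  have hH : μ.real H = 1 / 2 := gaussianReal_prod_real_halfPlane (w := (0, -1)) (by simp)
  have hL : μ L = 0 := gaussianReal_prod_line_eq_zero (w := (0, -1)) (by simp)
  have hWH : W ⊆ H := fun x (hx : b * |x.1| ≤ x.2) ↦ by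
    change 0 * x.1 + -1 * x.2 ≤ 0
    nlinarith [abs_nonneg x.1]
  have hsub : {x : ℝ × ℝ | (if x.2 < b * |x.1| then 1 else -1) ≠ Real.sign (0 * x.1 + -1 * x.2)}
      ⊆ (H \ W) ∪ L := by
    intro x hx
    by_cases hlt : x.2 < b * |x.1|
    · rw [mem_ofPred_eq, if_pos hlt, Real.one_ne_sign_iff] at hx
      exact Or.inl ⟨hx, not_le.2 hlt⟩
    · rw [mem_ofPred_eq, if_neg hlt, Real.neg_one_ne_sign_iff] at hx
      right
      change 0 * x.1 + -1 * x.2 = 0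
      nlinarith [abs_nonneg x.1, not_lt.1 hlt]
  calc halfspaceError b (0, -1) ≤ μ.real ((H \ W) ∪ L) := measureReal_mono hsub
    _ ≤ μ.real (H \ W) + μ.real L := measureReal_union_le _ _
    _ = 1 / 2 - arctan b⁻¹ / π := by
      rw [measureReal_sdiff hWH (measurableSet_le (by fun_prop) (by fun_prop)), hH, hW,
        measureReal_def, hL, ENNReal.toReal_zero, add_zero]

theorem tendsto_half_sub_arctan_inv_div_pi_nhdsGT_zero :
    Tendsto (fun b ↦ 1 / 2 - arctan b⁻¹ / π) (nhdsWithin 0 (Ioi 0)) (nhds 0) := by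
  have h := (((tendsto_arctan_atTop.mono_right nhdsWithin_le_nhds).comp
    tendsto_inv_nhdsGT_zero).div_const π).const_sub (1 / 2 : ℝ)
  rwa [div_div_cancel_left' pi_ne_zero, ← one_div, sub_self] at h

theorem tendsto_half_sub_arctan_inv_div_pi_atTop :
    Tendsto (fun b ↦ 1 / 2 - arctan b⁻¹ / π) atTop (nhds (1 / 2)) := by
  have h := ((continuous_arctan.tendsto 0).comp tendsto_inv_atTop_zero).div_const π
  simpa [Function.comp_def] using h.const_sub (1 / 2 : ℝ)

theorem stmt_19 (b : ℝ) (hb : 0 < b)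
    (μ : Measure (ℝ × ℝ)) (hμ : μ = (gaussianReal 0 1).prod (gaussianReal 0 1))
    (label : ℝ × ℝ → ℝ)
    (hlabel : ∀ x : ℝ × ℝ, label x = if x.2 < b * |x.1| then 1 else -1)
    (OPT : ℝ)
    (hOPT : OPT = sInf {e : ℝ | ∃ w : ℝ × ℝ, w.1 ^ 2 + w.2 ^ 2 = 1 ∧
      e = (μ {x | label x ≠ Real.sign (w.1 * x.1 + w.2 * x.2)}).toReal}) :
    OPT = 1 / 2 - Real.arctan (1 / b) / Real.pi ∧
    Tendsto (fun b' : ℝ => 1 / 2 - Real.arctan (1 / b') / Real.pi)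
      (nhdsWithin 0 (Set.Ioi 0)) (nhds 0) ∧
    Tendsto (fun b' : ℝ => 1 / 2 - Real.arctan (1 / b') / Real.pi)
      atTop (nhds (1 / 2)) := by
  subst hμ hOPT
  obtain rfl : label = fun x ↦ if x.2 < b * |x.1| then 1 else -1 := funext hlabel
  have hfun : (fun b' : ℝ ↦ 1 / 2 - arctan (1 / b') / π) = fun b' ↦ 1 / 2 - arctan b'⁻¹ / π :=
    funext fun b' ↦ by rw [one_div b']
  rw [hfun, one_div b]
  refine ⟨IsLeast.csInf_eq ⟨⟨(0, -1), by norm_num, (halfspaceError_zero_neg_one hb).symm⟩, ?_⟩,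
    tendsto_half_sub_arctan_inv_div_pi_nhdsGT_zero, tendsto_half_sub_arctan_inv_div_pi_atTop⟩
  rintro _ ⟨w, hw, rfl⟩
  exact le_halfspaceError hb (by rintro rfl; norm_num at hw)
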